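/- Let m, n ≥ 2 and let P be the m×n monic symmetric biquadratic form with parameters a, b, c ∈ ℝ. If P(x,y) ≥ 0 for all x ∈ ℝ^m, y ∈ ℝ^n, then P is SOS: there exist finitely many bilinear forms f_1, …, f_r, with f_p(x,y) = ∑_{i=1}^m ∑_{j=1}^n w^p_{ij} x_i y_j, such that P(x,y) = ∑_{p=1}^r f_p(x,y)² for all x, y. -/
import Mathlib


open Finset

/-- The m×n monic symmetric biquadratic form with parameters a, b, c. -/
noncomputable def monicForm (m n : ℕ) (a b c : ℝ) (x : Fin m → ℝ) (y : Fin n → ℝ) : ℝ :=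
  (∑ i, ∑ j, (x i) ^ 2 * (y j) ^ 2)
  + a * ∑ i, ∑ k, ∑ j, (if i ≠ k then x i * x k * (y j) ^ 2 else 0)
  + b * ∑ i, ∑ j, ∑ l, (if j ≠ l then (x i) ^ 2 * y j * y l else 0)
  + c * ∑ i, ∑ k, ∑ j, ∑ l, (if i ≠ k ∧ j ≠ l then x i * y j * x k * y l else 0)

lemma offdiag_sum {k : ℕ} (f : Fin k → ℝ) :
    ∑ i, ∑ j, (if i ≠ j then f i * f j else 0) = (∑ i, f i) ^ 2 - ∑ i, (f i) ^ 2 := by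
  have h : ∀ i : Fin k, ∑ j, (if i ≠ j then f i * f j else 0)
      = f i * (∑ j, f j) - f i * f i := by
    intro i
    have e : ∀ j : Fin k, (if i ≠ j then f i * f j else 0)
        = f i * f j - (if i = j then f i * f j else 0) := by
      intro j; by_cases h : i = j <;> simp [h]
    rw [Finset.sum_congr rfl (fun j _ => e j), Finset.sum_sub_distrib,
      Finset.sum_ite_eq, ← Finset.mul_sum]
    simp
  rw [Finset.sum_congr rfl (fun i _ => h i), Finset.sum_sub_distrib, ← Finset.sum_mul]
  ring_nf

lemma monicForm_eq (m n : ℕ) (a b c : ℝ) (x : Fin m → ℝ) (y : Fin n → ℝ) :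
    monicForm m n a b c x y =
      (∑ i, (x i)^2) * (∑ j, (y j)^2)
      + a * (((∑ i, x i)^2 - ∑ i, (x i)^2) * (∑ j, (y j)^2))
      + b * ((∑ i, (x i)^2) * ((∑ j, y j)^2 - ∑ j, (y j)^2))
      + c * (((∑ i, x i)^2 - ∑ i, (x i)^2) * ((∑ j, y j)^2 - ∑ j, (y j)^2)) := by
  have h1 : (∑ i, ∑ j, (x i)^2 * (y j)^2) = (∑ i, (x i)^2) * (∑ j, (y j)^2) := by
    rw [Finset.sum_mul_sum]
  have h2 : (∑ i, ∑ k, ∑ j, (if i ≠ k then x i * x k * (y j) ^ 2 else 0))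
      = ((∑ i, x i)^2 - ∑ i, (x i)^2) * (∑ j, (y j)^2) := by
    have e : ∀ i k : Fin m, (∑ j, (if i ≠ k then x i * x k * (y j)^2 else 0))
        = (if i ≠ k then x i * x k else 0) * (∑ j, (y j)^2) := by
      intro i k; by_cases h : i ≠ k <;> simp [h, Finset.mul_sum]
    simp_rw [e, ← Finset.sum_mul]
    rw [offdiag_sum]
  have h3 : (∑ i, ∑ j, ∑ l, (if j ≠ l then (x i) ^ 2 * y j * y l else 0))
      = (∑ i, (x i)^2) * ((∑ j, y j)^2 - ∑ j, (y j)^2) := by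
    have e : ∀ i : Fin m, (∑ j, ∑ l, (if j ≠ l then (x i) ^ 2 * y j * y l else 0))
        = (x i)^2 * (∑ j, ∑ l, (if j ≠ l then y j * y l else 0)) := by
      intro i
      rw [Finset.mul_sum]
      apply Finset.sum_congr rfl; intro j _
      rw [Finset.mul_sum]
      apply Finset.sum_congr rfl; intro l _
      by_cases h : j ≠ l <;> simp [h] <;> ring
    simp_rw [e, ← Finset.sum_mul]
    rw [offdiag_sum]
  have h4 : (∑ i, ∑ k, ∑ j, ∑ l, (if i ≠ k ∧ j ≠ l then x i * y j * x k * y l else 0))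
      = ((∑ i, x i)^2 - ∑ i, (x i)^2) * ((∑ j, y j)^2 - ∑ j, (y j)^2) := by
    have e : ∀ i k : Fin m, (∑ j, ∑ l, (if i ≠ k ∧ j ≠ l then x i * y j * x k * y l else 0))
        = (if i ≠ k then x i * x k else 0) * (∑ j, ∑ l, (if j ≠ l then y j * y l else 0)) := by
      intro i k
      rw [Finset.mul_sum]
      apply Finset.sum_congr rfl; intro j _
      rw [Finset.mul_sum]
      apply Finset.sum_congr rfl; intro l _
      by_cases h1 : i ≠ k <;> by_cases h2 : j ≠ l <;> simp [h1, h2] <;> ring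
    simp_rw [e, ← Finset.sum_mul]
    rw [offdiag_sum, offdiag_sum]
  unfold monicForm
  rw [h1, h2, h3, h4]

lemma testvec {k : ℕ} (hk : 2 ≤ k) :
    ∃ f : Fin k → ℝ, (∑ i, f i) = 0 ∧ (∑ i, (f i)^2) = 2 := by
  have h0 : 0 < k := by omega
  have h1 : 1 < k := by omega
  set i0 : Fin k := ⟨0, h0⟩ with hi0
  set i1 : Fin k := ⟨1, h1⟩ with hi1
  have hne : i0 ≠ i1 := by simp [hi0, hi1, Fin.ext_iff]
  refine ⟨fun i => if i = i0 then 1 else if i = i1 then -1 else 0, ?_, ?_⟩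
  · have hs : (∑ i, (if i = i0 then (1:ℝ) else if i = i1 then -1 else 0))
        = ∑ i ∈ ({i0, i1} : Finset (Fin k)), (if i = i0 then (1:ℝ) else if i = i1 then -1 else 0) := by
      refine (Finset.sum_subset (Finset.subset_univ _) ?_).symm
      intro i _ hi
      simp only [Finset.mem_insert, Finset.mem_singleton, not_or] at hi
      simp [hi.1, hi.2]
    rw [hs, Finset.sum_pair hne]
    simp [hne, hne.symm]
  · have hs : (∑ i, ((if i = i0 then (1:ℝ) else if i = i1 then -1 else 0))^2)
        = ∑ i ∈ ({i0, i1} : Finset (Fin k)), ((if i = i0 then (1:ℝ) else if i = i1 then -1 else 0))^2 := by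
      refine (Finset.sum_subset (Finset.subset_univ _) ?_).symm
      intro i _ hi
      simp only [Finset.mem_insert, Finset.mem_singleton, not_or] at hi
      simp [hi.1, hi.2]
    rw [hs, Finset.sum_pair hne]
    simp [hne, hne.symm]
    norm_num

lemma key4 {m n : ℕ} {β : Type*} [AddCommMonoid β] (F : Fin m → Fin n → β) :
    (∑ p : Fin (m*n), F (finProdFinEquiv.symm p).1 (finProdFinEquiv.symm p).2)
      = ∑ i₀, ∑ j₀, F i₀ j₀ :=
  calc (∑ p : Fin (m*n), F (finProdFinEquiv.symm p).1 (finProdFinEquiv.symm p).2)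
      = ∑ q : Fin m × Fin n, F q.1 q.2 := Fintype.sum_equiv finProdFinEquiv.symm _ _ (fun p => rfl)
    _ = ∑ i₀, ∑ j₀, F i₀ j₀ := Fintype.sum_prod_type _

lemma split4 {α β : Type*} [AddCommMonoid β] {m n : ℕ} (W1 : Fin 1 → α) (W2 : Fin n → α)
    (W3 : Fin m → α) (W4 : Fin m → Fin n → α) (F : α → β) :
    ∑ p : Fin (1+n+m+m*n), F (Fin.append (Fin.append (Fin.append W1 W2) W3)
        (fun p => W4 (finProdFinEquiv.symm p).1 (finProdFinEquiv.symm p).2) p)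
      = F (W1 0) + ∑ j₀, F (W2 j₀) + ∑ i₀, F (W3 i₀) + ∑ i₀, ∑ j₀, F (W4 i₀ j₀) := by
  rw [Fin.sum_univ_add, Fin.sum_univ_add, Fin.sum_univ_add]
  congr 1
  · congr 1
    · congr 1
      · simp [Fin.append_left]
      · apply Finset.sum_congr rfl; intro j₀ _
        simp [Fin.append_left, Fin.append_right]
    · apply Finset.sum_congr rfl; intro i₀ _
      simp [Fin.append_left, Fin.append_right]
  · rw [← key4 (fun i₀ j₀ => F (W4 i₀ j₀))]
    apply Finset.sum_congr rfl; intro p _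
    simp [Fin.append_right]

noncomputable def sosW (m n : ℕ) (s1 s2 s3 s4 : ℝ) : Fin (1+n+m+m*n) → Fin m → Fin n → ℝ :=
  Fin.append (Fin.append (Fin.append
    (fun _ : Fin 1 => fun _ _ => s1)
    (fun j₀ => fun _ j => s2 * ((if j = j₀ then 1 else 0) - 1/(n:ℝ))))
    (fun i₀ => fun i _ => s3 * ((if i = i₀ then 1 else 0) - 1/(m:ℝ))))
    (fun p => (fun i₀ j₀ => fun i j =>
        s4 * ((if i = i₀ then 1 else 0) - 1/(m:ℝ)) * ((if j = j₀ then 1 else 0) - 1/(n:ℝ)))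
      (finProdFinEquiv.symm p).1 (finProdFinEquiv.symm p).2)

lemma delta_sum {k : ℕ} (hk : (k:ℝ) ≠ 0) (y : Fin k → ℝ) (j₀ : Fin k) :
    (∑ j, ((if j = j₀ then (1:ℝ) else 0) - 1/(k:ℝ)) * y j) = y j₀ - (∑ j, y j)/(k:ℝ) := by
  have e : ∀ j : Fin k, ((if j = j₀ then (1:ℝ) else 0) - 1/(k:ℝ)) * y j
      = (if j = j₀ then y j else 0) - (1/(k:ℝ)) * y j := by
    intro j; by_cases h : j = j₀ <;> simp [h] <;> ring
  rw [Finset.sum_congr rfl (fun j _ => e j), Finset.sum_sub_distrib,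
    Finset.sum_ite_eq', ← Finset.mul_sum]
  simp
  ring

lemma delta_var {k : ℕ} (hk : (k:ℝ) ≠ 0) (y : Fin k → ℝ) :
    (∑ j₀, (y j₀ - (∑ j, y j)/(k:ℝ))^2) = (∑ j, (y j)^2) - (∑ j, y j)^2/(k:ℝ) := by
  have e : ∀ j₀ : Fin k, (y j₀ - (∑ j, y j)/(k:ℝ))^2
      = (y j₀)^2 - (2*((∑ j, y j)/(k:ℝ)))*y j₀ + ((∑ j, y j)/(k:ℝ))^2 := fun _ => by ring
  rw [Finset.sum_congr rfl (fun j _ => e j), Finset.sum_add_distrib, Finset.sum_sub_distrib,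
    ← Finset.mul_sum, Finset.sum_const, Finset.card_univ, Fintype.card_fin, nsmul_eq_mul]
  field_simp
  ring

set_option maxHeartbeats 1000000 in
lemma sosW_eval (m n : ℕ) (hm : (m:ℝ) ≠ 0) (hn : (n:ℝ) ≠ 0) (s1 s2 s3 s4 : ℝ)
    (x : Fin m → ℝ) (y : Fin n → ℝ) :
    ∑ p, (∑ i, ∑ j, sosW m n s1 s2 s3 s4 p i j * x i * y j)^2
      = s1^2*((∑ i, x i)^2*(∑ j, y j)^2)
      + s2^2*((∑ i, x i)^2*((∑ j, (y j)^2) - (∑ j, y j)^2/(n:ℝ)))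
      + s3^2*(((∑ i, (x i)^2) - (∑ i, x i)^2/(m:ℝ))*(∑ j, y j)^2)
      + s4^2*(((∑ i, (x i)^2) - (∑ i, x i)^2/(m:ℝ))*((∑ j, (y j)^2) - (∑ j, y j)^2/(n:ℝ))) := by
  have b1 : (∑ i, ∑ j, s1 * x i * y j) = s1 * ((∑ i, x i) * (∑ j, y j)) := by
    have st : ∀ i : Fin m, (∑ j, s1 * x i * y j) = (s1 * x i) * (∑ j, y j) := by
      intro i
      rw [Finset.mul_sum]
    rw [Finset.sum_congr rfl (fun i _ => st i), ← Finset.sum_mul, ← Finset.mul_sum]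
    ring
  have b2 : ∀ j₀ : Fin n, (∑ i, ∑ j, (s2 * ((if j = j₀ then (1:ℝ) else 0) - 1/(n:ℝ))) * x i * y j)
      = s2 * ((∑ i, x i) * (y j₀ - (∑ j, y j)/(n:ℝ))) := by
    intro j₀
    have st : ∀ i : Fin m, (∑ j, (s2 * ((if j = j₀ then (1:ℝ) else 0) - 1/(n:ℝ))) * x i * y j)
        = x i * (s2 * (y j₀ - (∑ j, y j)/(n:ℝ))) := by
      intro i
      have e : ∀ j : Fin n, (s2 * ((if j = j₀ then (1:ℝ) else 0) - 1/(n:ℝ))) * x i * y j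
          = (x i * s2) * (((if j = j₀ then (1:ℝ) else 0) - 1/(n:ℝ)) * y j) := fun j => by ring
      rw [Finset.sum_congr rfl (fun j _ => e j), ← Finset.mul_sum, delta_sum hn y j₀]
      ring
    rw [Finset.sum_congr rfl (fun i _ => st i), ← Finset.sum_mul]
    ring
  have b3 : ∀ i₀ : Fin m, (∑ i, ∑ j, (s3 * ((if i = i₀ then (1:ℝ) else 0) - 1/(m:ℝ))) * x i * y j)
      = s3 * ((x i₀ - (∑ i, x i)/(m:ℝ)) * (∑ j, y j)) := by
    intro i₀
    have st : ∀ i : Fin m, (∑ j, (s3 * ((if i = i₀ then (1:ℝ) else 0) - 1/(m:ℝ))) * x i * y j)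
        = (((if i = i₀ then (1:ℝ) else 0) - 1/(m:ℝ)) * x i) * (s3 * (∑ j, y j)) := by
      intro i
      have e : ∀ j : Fin n, (s3 * ((if i = i₀ then (1:ℝ) else 0) - 1/(m:ℝ))) * x i * y j
          = ((((if i = i₀ then (1:ℝ) else 0) - 1/(m:ℝ)) * x i) * s3) * y j := fun j => by ring
      rw [Finset.sum_congr rfl (fun j _ => e j), ← Finset.mul_sum]
      ring
    rw [Finset.sum_congr rfl (fun i _ => st i), ← Finset.sum_mul, delta_sum hm x i₀]
    ring
  have b4 : ∀ (i₀ : Fin m) (j₀ : Fin n),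
      (∑ i, ∑ j, (s4 * ((if i = i₀ then (1:ℝ) else 0) - 1/(m:ℝ)) * ((if j = j₀ then (1:ℝ) else 0) - 1/(n:ℝ))) * x i * y j)
      = s4 * ((x i₀ - (∑ i, x i)/(m:ℝ)) * (y j₀ - (∑ j, y j)/(n:ℝ))) := by
    intro i₀ j₀
    have st : ∀ i : Fin m,
        (∑ j, (s4 * ((if i = i₀ then (1:ℝ) else 0) - 1/(m:ℝ)) * ((if j = j₀ then (1:ℝ) else 0) - 1/(n:ℝ))) * x i * y j)
        = (((if i = i₀ then (1:ℝ) else 0) - 1/(m:ℝ)) * x i) * (s4 * (y j₀ - (∑ j, y j)/(n:ℝ))) := by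
      intro i
      have e : ∀ j : Fin n,
          (s4 * ((if i = i₀ then (1:ℝ) else 0) - 1/(m:ℝ)) * ((if j = j₀ then (1:ℝ) else 0) - 1/(n:ℝ))) * x i * y j
          = ((((if i = i₀ then (1:ℝ) else 0) - 1/(m:ℝ)) * x i) * s4) * (((if j = j₀ then (1:ℝ) else 0) - 1/(n:ℝ)) * y j) :=
        fun j => by ring
      rw [Finset.sum_congr rfl (fun j _ => e j), ← Finset.mul_sum, delta_sum hn y j₀]
      ring
    rw [Finset.sum_congr rfl (fun i _ => st i), ← Finset.sum_mul, delta_sum hm x i₀]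
    ring
  calc ∑ p, (∑ i, ∑ j, sosW m n s1 s2 s3 s4 p i j * x i * y j)^2
      = (∑ i, ∑ j, s1 * x i * y j)^2
        + (∑ j₀, (∑ i, ∑ j, (s2 * ((if j = j₀ then (1:ℝ) else 0) - 1/(n:ℝ))) * x i * y j)^2)
        + (∑ i₀, (∑ i, ∑ j, (s3 * ((if i = i₀ then (1:ℝ) else 0) - 1/(m:ℝ))) * x i * y j)^2)
        + (∑ i₀, ∑ j₀, (∑ i, ∑ j, (s4 * ((if i = i₀ then (1:ℝ) else 0) - 1/(m:ℝ)) * ((if j = j₀ then (1:ℝ) else 0) - 1/(n:ℝ))) * x i * y j)^2) :=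
        by
        rw [Fin.sum_univ_add, Fin.sum_univ_add, Fin.sum_univ_add]
        congr 1
        · congr 1
          · congr 1
            · simp [sosW, Fin.append_left]
            · apply Finset.sum_congr rfl; intro j₀ _
              simp [sosW, Fin.append_left, Fin.append_right]
          · apply Finset.sum_congr rfl; intro i₀ _
            simp [sosW, Fin.append_left, Fin.append_right]
        · exact Eq.trans (Finset.sum_congr rfl (fun p _ => by simp [sosW, Fin.append_right]))
            (key4 (fun i₀ j₀ => (∑ i, ∑ j, (s4 * ((if i = i₀ then (1:ℝ) else 0) - 1/(m:ℝ)) * ((if j = j₀ then (1:ℝ) else 0) - 1/(n:ℝ))) * x i * y j)^2))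
    _ = s1^2*((∑ i, x i)^2*(∑ j, y j)^2)
        + s2^2*((∑ i, x i)^2*((∑ j, (y j)^2) - (∑ j, y j)^2/(n:ℝ)))
        + s3^2*(((∑ i, (x i)^2) - (∑ i, x i)^2/(m:ℝ))*(∑ j, y j)^2)
        + s4^2*(((∑ i, (x i)^2) - (∑ i, x i)^2/(m:ℝ))*((∑ j, (y j)^2) - (∑ j, y j)^2/(n:ℝ))) := by
        rw [b1]
        have c2 : (∑ j₀, (∑ i, ∑ j, (s2 * ((if j = j₀ then (1:ℝ) else 0) - 1/(n:ℝ))) * x i * y j)^2)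
            = s2^2*((∑ i, x i)^2*((∑ j, (y j)^2) - (∑ j, y j)^2/(n:ℝ))) := by
          have e : ∀ j₀ : Fin n, (∑ i, ∑ j, (s2 * ((if j = j₀ then (1:ℝ) else 0) - 1/(n:ℝ))) * x i * y j)^2
              = (s2^2 * (∑ i, x i)^2) * (y j₀ - (∑ j, y j)/(n:ℝ))^2 := by
            intro j₀; rw [b2 j₀]; ring
          rw [Finset.sum_congr rfl (fun j _ => e j), ← Finset.mul_sum, delta_var hn y]
          ring
        have c3 : (∑ i₀, (∑ i, ∑ j, (s3 * ((if i = i₀ then (1:ℝ) else 0) - 1/(m:ℝ))) * x i * y j)^2)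
            = s3^2*(((∑ i, (x i)^2) - (∑ i, x i)^2/(m:ℝ))*(∑ j, y j)^2) := by
          have e : ∀ i₀ : Fin m, (∑ i, ∑ j, (s3 * ((if i = i₀ then (1:ℝ) else 0) - 1/(m:ℝ))) * x i * y j)^2
              = (s3^2 * (∑ j, y j)^2) * (x i₀ - (∑ i, x i)/(m:ℝ))^2 := by
            intro i₀; rw [b3 i₀]; ring
          rw [Finset.sum_congr rfl (fun i _ => e i), ← Finset.mul_sum, delta_var hm x]
          ring
        have c4 : (∑ i₀, ∑ j₀, (∑ i, ∑ j, (s4 * ((if i = i₀ then (1:ℝ) else 0) - 1/(m:ℝ)) * ((if j = j₀ then (1:ℝ) else 0) - 1/(n:ℝ))) * x i * y j)^2)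
            = s4^2*(((∑ i, (x i)^2) - (∑ i, x i)^2/(m:ℝ))*((∑ j, (y j)^2) - (∑ j, y j)^2/(n:ℝ))) := by
          have e : ∀ i₀ : Fin m,
              (∑ j₀, (∑ i, ∑ j, (s4 * ((if i = i₀ then (1:ℝ) else 0) - 1/(m:ℝ)) * ((if j = j₀ then (1:ℝ) else 0) - 1/(n:ℝ))) * x i * y j)^2)
              = ((x i₀ - (∑ i, x i)/(m:ℝ))^2) * (s4^2 * ((∑ j, (y j)^2) - (∑ j, y j)^2/(n:ℝ))) := by
            intro i₀
            have e2 : ∀ j₀ : Fin n,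
                (∑ i, ∑ j, (s4 * ((if i = i₀ then (1:ℝ) else 0) - 1/(m:ℝ)) * ((if j = j₀ then (1:ℝ) else 0) - 1/(n:ℝ))) * x i * y j)^2
                = (s4^2 * (x i₀ - (∑ i, x i)/(m:ℝ))^2) * (y j₀ - (∑ j, y j)/(n:ℝ))^2 := by
              intro j₀; rw [b4 i₀ j₀]; ring
            rw [Finset.sum_congr rfl (fun j _ => e2 j), ← Finset.mul_sum, delta_var hn y]
            ring
          rw [Finset.sum_congr rfl (fun i _ => e i), ← Finset.sum_mul, delta_var hm x]
          ring
        rw [c2, c3, c4]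
        ring


set_option maxHeartbeats 1000000 in
/-- every PSD monic symmetric biquadratic form is SOS. -/
theorem monic_symmetric_psd_implies_sos (m n : ℕ) (hm : 2 ≤ m) (hn : 2 ≤ n) (a b c : ℝ)
    (hpsd : ∀ (x : Fin m → ℝ) (y : Fin n → ℝ), 0 ≤ monicForm m n a b c x y) :
    ∃ (r : ℕ) (w : Fin r → Fin m → Fin n → ℝ), ∀ (x : Fin m → ℝ) (y : Fin n → ℝ),
      monicForm m n a b c x y = ∑ p, (∑ i, ∑ j, w p i j * x i * y j) ^ 2 := by
  have hm0 : (0:ℝ) < (m:ℝ) := by exact_mod_cast (by omega : (0:ℕ) < m)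
  have hn0 : (0:ℝ) < (n:ℝ) := by exact_mod_cast (by omega : (0:ℕ) < n)
  have hM : (m:ℝ) ≠ 0 := hm0.ne'
  have hN : (n:ℝ) ≠ 0 := hn0.ne'
  obtain ⟨u, hu1, hu2⟩ := testvec hm
  obtain ⟨v, hv1, hv2⟩ := testvec hn
  have e1 : ∑ i : Fin m, ((fun _ : Fin m => (1:ℝ)) i) = (m:ℝ) := by simp
  have e2 : ∑ i : Fin m, ((fun _ : Fin m => (1:ℝ)) i)^2 = (m:ℝ) := by simp
  have f1 : ∑ j : Fin n, ((fun _ : Fin n => (1:ℝ)) j) = (n:ℝ) := by simp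
  have f2 : ∑ j : Fin n, ((fun _ : Fin n => (1:ℝ)) j)^2 = (n:ℝ) := by simp
  have h1 : 0 ≤ 1 + a*((m:ℝ)-1) + b*((n:ℝ)-1) + c*(((m:ℝ)-1)*((n:ℝ)-1)) := by
    have h := hpsd (fun _ => 1) (fun _ => 1)
    rw [monicForm_eq, e1, e2, f1, f2] at h
    nlinarith [mul_pos hm0 hn0, h]
  have h2 : 0 ≤ 1 + a*((m:ℝ)-1) - b - c*((m:ℝ)-1) := by
    have h := hpsd (fun _ => 1) v
    rw [monicForm_eq, e1, e2, hv1, hv2] at h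
    nlinarith [hm0, h]
  have h3 : 0 ≤ 1 - a + b*((n:ℝ)-1) - c*((n:ℝ)-1) := by
    have h := hpsd u (fun _ => 1)
    rw [monicForm_eq, f1, f2, hu1, hu2] at h
    nlinarith [hn0, h]
  have h4 : 0 ≤ 1 - a - b + c := by
    have h := hpsd u v
    rw [monicForm_eq, hu1, hu2, hv1, hv2] at h
    nlinarith [h]
  refine ⟨1+n+m+m*n, sosW m n
    (Real.sqrt ((1 + a*((m:ℝ)-1) + b*((n:ℝ)-1) + c*(((m:ℝ)-1)*((n:ℝ)-1)))/((m:ℝ)*(n:ℝ))))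
    (Real.sqrt ((1 + a*((m:ℝ)-1) - b - c*((m:ℝ)-1))/(m:ℝ)))
    (Real.sqrt ((1 - a + b*((n:ℝ)-1) - c*((n:ℝ)-1))/(n:ℝ)))
    (Real.sqrt (1 - a - b + c)), ?_⟩
  intro x y
  rw [monicForm_eq, sosW_eval m n hM hN,
    Real.sq_sqrt (div_nonneg h1 (mul_nonneg hm0.le hn0.le)),
    Real.sq_sqrt (div_nonneg h2 hm0.le),
    Real.sq_sqrt (div_nonneg h3 hn0.le),
    Real.sq_sqrt h4]
  field_simp
  ring
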